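/- Let X be a Banach space and u ∈ W^{1,p}(ℝⁿ; X) for 1 ≤ p < ∞. For x in a dyadic cube Q of side length 2^k and any m ∈ ℤⁿ, one has the pointwise identity u(x) − ⟨u⟩_{Q+2^k m} = ∫_{[-1,1]ⁿ} ∫_0^1 −2^k(m+z)·∇u(x + t·2^k(m+z)) dt · 1_Q(x + 2^k z) dz, where ⟨u⟩_R denotes the average of u over the set R. Consequently, ‖u − ⟨u⟩_{Q+2^k m}‖ on Q is controlled by averages of translates of 2^k(m+z)·∇u. -/

import Mathlib

/-!
By the fundamental theorem of calculus along the segment from `x` to `x + 2^k (m + z)`, the inner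
integral is `u x - u (x + 2^k z + 2^k m)`. The factor `1_Q (x + 2^k z)` vanishes unless
`z ∈ [-1,1]ⁿ`, since `x ∈ Q` as well, so the outer integral may be taken over all of `ℝⁿ`.
The substitution `w = x + 2^k z` turns it into `2^{-kn} ∫_Q (u x - u (w + 2^k m)) dw`, which is
`u x` minus the average of `u` over `Q + 2^k m` because `|Q| = 2^{kn}`.
-/

open MeasureTheory
open scoped ENNReal

noncomputable section

def dyadicCube (n : ℕ) (k : ℤ) (m : Fin n → ℤ) : Set (Fin n → ℝ) :=
  {x | ∀ i, (2 : ℝ) ^ k * (m i : ℝ) ≤ x i ∧ x i < (2 : ℝ) ^ k * ((m i : ℝ) + 1)}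

def setAvg (n : ℕ) {X : Type*} [NormedAddCommGroup X] [NormedSpace ℝ X]
    (S : Set (Fin n → ℝ)) (u : (Fin n → ℝ) → X) : X :=
  ((volume S).toReal)⁻¹ • ∫ y in S, u y

open Set

theorem dyadicCube_eq_pi (n : ℕ) (k : ℤ) (m : Fin n → ℤ) :
    dyadicCube n k m = pi univ fun i => Ico ((2 : ℝ) ^ k * m i) ((2 : ℝ) ^ k * (m i + 1)) := by
  ext x; simp [dyadicCube]

theorem measurableSet_dyadicCube (n : ℕ) (k : ℤ) (m : Fin n → ℤ) :
    MeasurableSet (dyadicCube n k m) := by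
  rw [dyadicCube_eq_pi]; exact .univ_pi fun _ => measurableSet_Ico

theorem volume_dyadicCube (n : ℕ) (k : ℤ) (m : Fin n → ℤ) :
    volume (dyadicCube n k m) = ENNReal.ofReal ((2 : ℝ) ^ k) ^ n := by
  simp only [dyadicCube_eq_pi, volume_pi_pi, Real.volume_Ico, mul_add, mul_one, add_sub_cancel_left,
    Finset.prod_const, Finset.card_univ, Fintype.card_fin]

theorem volume_dyadicCube_toReal (n : ℕ) (k : ℤ) (m : Fin n → ℤ) :
    (volume (dyadicCube n k m)).toReal = ((2 : ℝ) ^ k) ^ n := by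
  rw [volume_dyadicCube, ENNReal.toReal_pow, ENNReal.toReal_ofReal (by positivity)]

theorem Continuous.integrableOn_dyadicCube {n : ℕ} {k : ℤ} {m : Fin n → ℤ} {X : Type*}
    [NormedAddCommGroup X] {f : (Fin n → ℝ) → X} (hf : Continuous f) :
    IntegrableOn f (dyadicCube n k m) := by
  rw [dyadicCube_eq_pi]
  exact (hf.continuousOn.integrableOn_compact (isCompact_univ_pi fun _ => isCompact_Icc)).mono_set
    (pi_mono fun _ _ => Ico_subset_Icc_self)

theorem mem_pi_Icc_of_add_smul_mem_dyadicCube {n : ℕ} {k : ℤ} {m : Fin n → ℤ}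
    {x z : Fin n → ℝ} (hx : x ∈ dyadicCube n k m) (hxz : x + (2 : ℝ) ^ k • z ∈ dyadicCube n k m) :
    z ∈ pi univ fun _ => Icc (-1 : ℝ) 1 := by
  intro i _
  have hc : (0 : ℝ) < 2 ^ k := by positivity
  obtain ⟨hx₁, hx₂⟩ := hx i
  obtain ⟨hxz₁, hxz₂⟩ := hxz i
  simp only [Pi.add_apply, Pi.smul_apply, smul_eq_mul] at hxz₁ hxz₂
  constructor <;> nlinarith

theorem integral_fderiv_apply_segment {E X : Type*} [NormedAddCommGroup E] [NormedSpace ℝ E]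
    [NormedAddCommGroup X] [NormedSpace ℝ X] [CompleteSpace X] {u : E → X}
    (hu : ContDiff ℝ 1 u) (x v : E) :
    ∫ t in (0 : ℝ)..1, fderiv ℝ u (x + t • v) v = u (x + v) - u x := by
  have hline : ∀ t : ℝ, HasDerivAt (fun t : ℝ => x + t • v) v t := fun t => by
    simpa using ((hasDerivAt_id t).smul_const v).const_add x
  have hderiv : ∀ t ∈ uIcc (0 : ℝ) 1,
      HasDerivAt (fun t : ℝ => u (x + t • v)) (fderiv ℝ u (x + t • v) v) t := fun t _ =>
    ((hu.differentiable one_ne_zero _).hasFDerivAt).comp_hasDerivAt t (hline t)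
  have hcont : Continuous fun t : ℝ => fderiv ℝ u (x + t • v) v :=
    ((hu.continuous_fderiv one_ne_zero).comp (continuous_const.add
      (continuous_id.smul continuous_const))).clm_apply continuous_const
  rw [intervalIntegral.integral_eq_sub_of_hasDerivAt hderiv (hcont.intervalIntegrable 0 1)]
  simp

theorem integral_comp_add_smul {E F : Type*} [NormedAddCommGroup E] [NormedSpace ℝ E]
    [MeasurableSpace E] [BorelSpace E] [FiniteDimensional ℝ E] [NormedAddCommGroup F]
    [NormedSpace ℝ F] (μ : Measure E) [μ.IsAddHaarMeasure] (g : E → F) (x : E) {c : ℝ}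
    (hc : 0 ≤ c) :
    ∫ z, g (x + c • z) ∂μ = (c ^ Module.finrank ℝ E)⁻¹ • ∫ w, g w ∂μ := by
  rw [Measure.integral_comp_smul_of_nonneg μ (fun w => g (x + w)) c (hR := hc),
    integral_add_left_eq_self]

theorem setAvg_const_sub {n : ℕ} {X : Type*} [NormedAddCommGroup X] [NormedSpace ℝ X]
    [CompleteSpace X] {S : Set (Fin n → ℝ)} (hS : volume S ≠ ∞) (hS₀ : volume S ≠ 0) {f : (Fin n → ℝ) → X}
    (hf : IntegrableOn f S) (c : X) :
    setAvg n S (fun y => c - f y) = c - setAvg n S f := by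
  have hS' : (volume S).toReal ≠ 0 := ENNReal.toReal_ne_zero.2 ⟨hS₀, hS⟩
  have hc : IntegrableOn (fun _ => c) S := integrableOn_const hS enorm_ne_top
  rw [setAvg, setAvg, integral_sub hc hf, setIntegral_const, measureReal_def,
    smul_sub, smul_smul, inv_mul_cancel₀ hS', one_smul]

theorem setAvg_image_add_right {n : ℕ} {X : Type*} [NormedAddCommGroup X] [NormedSpace ℝ X]
    (S : Set (Fin n → ℝ)) (a : Fin n → ℝ) (u : (Fin n → ℝ) → X) :
    setAvg n ((· + a) '' S) u = setAvg n S (fun y => u (y + a)) := by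
  have hvol : volume ((· + a) '' S) = volume S := by
    rw [image_add_right]; exact measure_preimage_add_right volume (-a) S
  rw [setAvg, setAvg, hvol,
    (measurePreserving_add_right volume a).setIntegral_image_emb (measurableEmbedding_addRight a)]

theorem poincare_pointwise_identity_general
    {X : Type*} [NormedAddCommGroup X] [NormedSpace ℝ X] [CompleteSpace X]
    (n : ℕ)
    (u : (Fin n → ℝ) → X) (hu : ContDiff ℝ 1 u)
    (k : ℤ) (m₀ m : Fin n → ℤ) (x : Fin n → ℝ)
    (hx : x ∈ dyadicCube n k m₀) :
    u x - setAvg n ((fun y => y + (2 : ℝ) ^ k • (fun i => (m i : ℝ))) '' dyadicCube n k m₀) u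
      = ∫ z in Set.pi Set.univ (fun _ : Fin n => Set.Icc (-1 : ℝ) 1),
          (Set.indicator (dyadicCube n k m₀) (fun _ => (1 : ℝ)) (x + (2 : ℝ) ^ k • z)) •
            (∫ t in (0 : ℝ)..1,
              -(fderiv ℝ u (x + (t * (2 : ℝ) ^ k) • ((fun i => (m i : ℝ)) + z))
                  ((2 : ℝ) ^ k • ((fun i => (m i : ℝ)) + z)))) := by
  set c : ℝ := 2 ^ k
  set M : Fin n → ℝ := fun i => (m i : ℝ)
  set Q := dyadicCube n k m₀
  set g := Q.indicator fun w => u x - u (w + c • M)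
  have hc : 0 < c := by positivity
  have hintegrand : ∀ z, g (x + c • z) = Q.indicator (fun _ => (1 : ℝ)) (x + c • z) •
      ∫ t in (0 : ℝ)..1, -(fderiv ℝ u (x + (t * c) • (M + z)) (c • (M + z))) := fun z => by
    simp_rw [intervalIntegral.integral_neg, mul_smul, integral_fderiv_apply_segment hu]
    rw [neg_sub, smul_add, add_comm (c • M), ← add_assoc]
    by_cases h : x + c • z ∈ Q <;> simp [g, h]
  have hsupport : ∀ z ∉ pi univ fun _ => Icc (-1 : ℝ) 1, g (x + c • z) = 0 := fun z hz =>
    indicator_of_notMem (fun h => hz (mem_pi_Icc_of_add_smul_mem_dyadicCube hx h)) _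
  have hQ : volume Q = ENNReal.ofReal c ^ n := volume_dyadicCube n k m₀
  calc u x - setAvg n ((· + c • M) '' Q) u
      = setAvg n Q (fun w => u x - u (w + c • M)) := by
        have hint : IntegrableOn (fun w => u (w + c • M)) Q :=
          (hu.continuous.comp (continuous_add_const _)).integrableOn_dyadicCube
        rw [setAvg_image_add_right, setAvg_const_sub (by simp [hQ]) (by simp [hQ, hc]) hint]
    _ = (c ^ n)⁻¹ • ∫ w, g w := by
        rw [setAvg, volume_dyadicCube_toReal, integral_indicator (measurableSet_dyadicCube ..)]
    _ = ∫ z, g (x + c • z) := by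
        rw [integral_comp_add_smul volume g x hc.le, Module.finrank_fin_fun]
    _ = ∫ z in pi univ fun _ => Icc (-1 : ℝ) 1, g (x + c • z) :=
        (setIntegral_eq_integral_of_forall_compl_eq_zero hsupport).symm
    _ = _ := setIntegral_congr_fun (.univ_pi fun _ => measurableSet_Icc)
        fun z _ => hintegrand z

/-- Pointwise Poincaré identity: for `u ∈ W^{1,p}(ℝⁿ;X)` (encoded as a differentiable
function which together with its gradient belongs to `L^p`), `x` in a dyadic cube `Q` of
side `2^k`, and `m ∈ ℤⁿ`, one has
`u(x) − ⟨u⟩_{Q+2^k m} = ∫_{[-1,1]ⁿ} (∫_0^1 −2^k(m+z)·∇u(x+t·2^k(m+z)) dt) 1_Q(x+2^k z) dz`. -/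
theorem poincare_pointwise_identity
    {X : Type*} [NormedAddCommGroup X] [NormedSpace ℝ X] [CompleteSpace X]
    (n : ℕ) (p : ℝ) (hp : 1 ≤ p)
    (u : (Fin n → ℝ) → X) (hu : ContDiff ℝ 1 u)
    (hup : MemLp u (ENNReal.ofReal p) volume)
    (hgradp : MemLp (fun x => fderiv ℝ u x) (ENNReal.ofReal p) volume)
    (k : ℤ) (m₀ m : Fin n → ℤ) (x : Fin n → ℝ)
    (hx : x ∈ dyadicCube n k m₀) :
    u x - setAvg n ((fun y => y + (2 : ℝ) ^ k • (fun i => (m i : ℝ))) '' dyadicCube n k m₀) u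
      = ∫ z in Set.pi Set.univ (fun _ : Fin n => Set.Icc (-1 : ℝ) 1),
          (Set.indicator (dyadicCube n k m₀) (fun _ => (1 : ℝ)) (x + (2 : ℝ) ^ k • z)) •
            (∫ t in (0 : ℝ)..1,
              -(fderiv ℝ u (x + (t * (2 : ℝ) ^ k) • ((fun i => (m i : ℝ)) + z))
                  ((2 : ℝ) ^ k • ((fun i => (m i : ℝ)) + z)))) :=
  poincare_pointwise_identity_general n u hu k m₀ m x hx
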